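/- arXiv:1801.06570 — 2 statements merged into one kernel-verified Lean document; each statement's English description precedes it below -/
import Mathlib

section
/- Fix β > 0 and B ≠ 0, and define φ : [−1,1] → ℝ by φ(y) := (β/2) y² + B y − I(y), where I(y) := ((1+y)/2) log((1+y)/2) + ((1−y)/2) log((1−y)/2) (with the convention 0·log 0 = 0 at y = ±1). Then φ attains its global maximum over [−1,1] at a unique point m₀, and m₀ ∈ (−1,1). -/
open Filter

noncomputable section

/-- Spin configuration in `{-1,1}^n` encoded by a Boolean vector. -/
def spinVec (n : ℕ) (σ : Fin n → Bool) : Fin n → ℝ := fun i => if σ i then 1 else -1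

/-- Local field `m_i(x) = ∑_j A i j * x j`. -/
def mloc {n : ℕ} (A : Matrix (Fin n) (Fin n) ℝ) (x : Fin n → ℝ) (i : Fin n) : ℝ :=
  ∑ j, A i j * x j

/-- Average local field `m̄(x)`. -/
def mbar {n : ℕ} (A : Matrix (Fin n) (Fin n) ℝ) (x : Fin n → ℝ) : ℝ :=
  (1 / (n : ℝ)) * ∑ i, mloc A x i

/-- `T_n(x) = (1/n) ∑_i (m_i(x) - m̄(x))²`. -/
def Tstat {n : ℕ} (A : Matrix (Fin n) (Fin n) ℝ) (x : Fin n → ℝ) : ℝ :=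
  (1 / (n : ℝ)) * ∑ i, (mloc A x i - mbar A x) ^ 2

/-- Unnormalized Ising weight `exp((β/2) xᵀAx + B ∑ x_i)`. -/
def isingWt {n : ℕ} (A : Matrix (Fin n) (Fin n) ℝ) (β B : ℝ) (x : Fin n → ℝ) : ℝ :=
  Real.exp (β / 2 * ∑ i, ∑ j, A i j * x i * x j + B * ∑ i, x i)

/-- Probability of the event `E` under the Ising measure `P_{n,β,B}`. -/
def isingProb {n : ℕ} (A : Matrix (Fin n) (Fin n) ℝ) (β B : ℝ) (E : Set (Fin n → ℝ)) : ℝ :=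
  (∑ σ : Fin n → Bool, E.indicator (isingWt A β B) (spinVec n σ)) /
    (∑ σ : Fin n → Bool, isingWt A β B (spinVec n σ))

/-- Expectation of `f` under the Ising measure `P_{n,β,B}`. -/
def isingExp {n : ℕ} (A : Matrix (Fin n) (Fin n) ℝ) (β B : ℝ) (f : (Fin n → ℝ) → ℝ) : ℝ :=
  (∑ σ : Fin n → Bool, f (spinVec n σ) * isingWt A β B (spinVec n σ)) /
    (∑ σ : Fin n → Bool, isingWt A β B (spinVec n σ))

/-- Pseudo-likelihood equation `Q_n(β,B|x)`. -/
def Qfun {n : ℕ} (A : Matrix (Fin n) (Fin n) ℝ) (β B : ℝ) (x : Fin n → ℝ) : ℝ :=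
  ∑ i, mloc A x i * (x i - Real.tanh (β * mloc A x i + B))

/-- Pseudo-likelihood equation `R_n(β,B|x)`. -/
def Rfun {n : ℕ} (A : Matrix (Fin n) (Fin n) ℝ) (β B : ℝ) (x : Fin n → ℝ) : ℝ :=
  ∑ i, (x i - Real.tanh (β * mloc A x i + B))

/-- `b_i(x) = tanh(β m_i(x) + B)`. -/
def bvec {n : ℕ} (A : Matrix (Fin n) (Fin n) ℝ) (β B : ℝ) (x : Fin n → ℝ) : Fin n → ℝ :=
  fun i => Real.tanh (β * mloc A x i + B)

/-- `f_n(y) = (β/2) yᵀAy + B ∑ y_i`. -/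
def fN {n : ℕ} (A : Matrix (Fin n) (Fin n) ℝ) (β B : ℝ) (y : Fin n → ℝ) : ℝ :=
  β / 2 * ∑ i, ∑ j, A i j * y i * y j + B * ∑ i, y i

/-- Entropy term `I(y)` (with `0 log 0 = 0`, as `Real.log 0 = 0`). -/
def entI {n : ℕ} (y : Fin n → ℝ) : ℝ :=
  ∑ i, ((1 + y i) / 2 * Real.log ((1 + y i) / 2) + (1 - y i) / 2 * Real.log ((1 - y i) / 2))

open Real Set

/-!
Via `φ_{β,B}(-y) = φ_{β,-B}(y)` we may assume `B > 0`, and then `φ(-y) = φ(y) - 2By` shows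
that `φ` is larger at `|y|` than at `-|y|`, so only `[0, 1]` matters. There
`φ' = βy + B - artanh y` is strictly concave on `[0, 1)` (as `artanh` is strictly convex there),
equals `B > 0` at `0` and tends to `-∞` at `1`. Hence it has exactly one zero `m ∈ (0, 1)`, is
positive before it and negative after it, so `φ` rises strictly up to `m` and falls strictly after.
-/
theorem Real.hasDerivAt_artanh {x : ℝ} (hx : x ∈ Ioo (-1 : ℝ) 1) :
    HasDerivAt artanh (1 / (1 - x ^ 2)) x := by
  obtain ⟨h₁, h₂⟩ := hx
  have hp₀ : 1 + x ≠ 0 := by linarith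
  have hm₀ : 1 - x ≠ 0 := by linarith
  have hp : HasDerivAt (fun y => log (1 + y)) (1 / (1 + x)) x := by
    simpa using ((hasDerivAt_id x).const_add 1).log hp₀
  have hm : HasDerivAt (fun y => log (1 - y)) (-1 / (1 - x)) x := by
    simpa using ((hasDerivAt_id x).const_sub 1).log hm₀
  have hlog : HasDerivAt (fun y => (log (1 + y) - log (1 - y)) / 2) (1 / (1 - x ^ 2)) x := by
    refine ((hp.sub hm).div_const 2).congr_deriv ?_
    rw [show 1 - x ^ 2 = (1 + x) * (1 - x) by ring]
    field_simp
    ring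
  refine hlog.congr_of_eventuallyEq ?_
  filter_upwards [Ioo_mem_nhds h₁ h₂] with y hy
  rw [artanh_eq_half_log (Ioo_subset_Icc_self hy),
    log_div (by linarith [hy.1]) (by linarith [hy.2])]
  ring

theorem Real.strictConvexOn_artanh : StrictConvexOn ℝ (Ico 0 1) artanh := by
  have hderiv : ∀ x ∈ Ico (0 : ℝ) 1, HasDerivAt artanh (1 / (1 - x ^ 2)) x :=
    fun x hx => hasDerivAt_artanh ⟨by linarith [hx.1], hx.2⟩
  refine StrictMonoOn.strictConvexOn_of_deriv (convex_Ico 0 1)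
    (fun x hx => (hderiv x hx).continuousAt.continuousWithinAt) ?_
  rw [interior_Ico]
  intro x hx y hy hxy
  rw [(hderiv x (Ioo_subset_Ico_self hx)).deriv, (hderiv y (Ioo_subset_Ico_self hy)).deriv]
  gcongr
  · nlinarith [hy.2, hy.1]
  · nlinarith [hx.1]

theorem Real.continuousOn_artanh : ContinuousOn artanh (Ioo (-1) 1) :=
  fun _ hx => (hasDerivAt_artanh hx).continuousAt.continuousWithinAt

theorem apply_lt_apply_of_deriv_pos_of_deriv_neg {f f' : ℝ → ℝ} {a b m : ℝ}
    (hf : ContinuousOn f (Icc a b)) (hf' : ∀ x ∈ Ioo a b, HasDerivAt f (f' x) x)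
    (hm : m ∈ Icc a b) (hpos : ∀ x ∈ Ioo a m, 0 < f' x) (hneg : ∀ x ∈ Ioo m b, f' x < 0)
    {y : ℝ} (hy : y ∈ Icc a b) (hym : y ≠ m) : f y < f m := by
  obtain ⟨ha, hb⟩ := hm
  rcases hym.lt_or_gt with hlt | hgt
  · have hmono : StrictMonoOn f (Icc a m) := by
      refine strictMonoOn_of_deriv_pos (convex_Icc a m) (hf.mono (Icc_subset_Icc_right hb)) ?_
      rw [interior_Icc]
      intro x hx
      rw [(hf' x ⟨hx.1, hx.2.trans_le hb⟩).deriv]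
      exact hpos x hx
    exact hmono ⟨hy.1, hlt.le⟩ ⟨ha, le_rfl⟩ hlt
  · have hanti : StrictAntiOn f (Icc m b) := by
      refine strictAntiOn_of_deriv_neg (convex_Icc m b) (hf.mono (Icc_subset_Icc_left ha)) ?_
      rw [interior_Icc]
      intro x hx
      rw [(hf' x ⟨ha.trans_lt hx.1, hx.2⟩).deriv]
      exact hneg x hx
    exact hanti ⟨le_rfl, hb⟩ ⟨hgt.le, hy.2⟩ hgt

namespace MeanField

-- The paper's `φ`, written with `binEntropy ((1 + y) / 2) = -I(y)`.
def phi (β B y : ℝ) : ℝ := β / 2 * y ^ 2 + B * y + binEntropy ((1 + y) / 2)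

def phiDeriv (β B y : ℝ) : ℝ := β * y + B - artanh y

variable {β B : ℝ}

theorem phi_eq (β B y : ℝ) :
    phi β B y = β / 2 * y ^ 2 + B * y -
      ((1 + y) / 2 * log ((1 + y) / 2) + (1 - y) / 2 * log ((1 - y) / 2)) := by
  rw [phi, binEntropy_eq_negMulLog_add_negMulLog_one_sub, negMulLog, negMulLog,
    show 1 - (1 + y) / 2 = (1 - y) / 2 by ring]
  ring

theorem phi_neg (β B y : ℝ) : phi β B (-y) = phi β (-B) y := by
  rw [phi, phi, show (1 + -y) / 2 = 1 - (1 + y) / 2 by ring, binEntropy_one_sub]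
  ring

theorem phi_neg_eq_sub (β B y : ℝ) : phi β B (-y) = phi β B y - 2 * B * y := by
  rw [phi_neg, phi, phi]
  ring

theorem continuous_phi (β B : ℝ) : Continuous (phi β B) := by
  unfold phi
  fun_prop

theorem hasDerivAt_phi {y : ℝ} (hy : y ∈ Ioo (-1 : ℝ) 1) :
    HasDerivAt (phi β B) (phiDeriv β B y) y := by
  obtain ⟨h₁, h₂⟩ := hy
  have hent : HasDerivAt (fun y => binEntropy ((1 + y) / 2))
      ((log (1 - (1 + y) / 2) - log ((1 + y) / 2)) * (1 / 2)) y :=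
    (hasDerivAt_binEntropy (by linarith) (by linarith)).comp y
      (((hasDerivAt_id y).const_add 1).div_const 2)
  refine ((((hasDerivAt_pow 2 y).const_mul (β / 2)).add
    ((hasDerivAt_id' y).const_mul B)).add hent).congr_deriv ?_
  rw [phiDeriv, artanh_eq_half_log ⟨h₁.le, h₂.le⟩, show 1 - (1 + y) / 2 = (1 - y) / 2 by ring,
    log_div (by linarith) two_ne_zero, log_div (by linarith) two_ne_zero,
    log_div (by linarith) (by linarith)]
  ring

theorem strictConcaveOn_phiDeriv (β B : ℝ) : StrictConcaveOn ℝ (Ico 0 1) (phiDeriv β B) :=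
  (((LinearMap.mul ℝ ℝ β).concaveOn (convex_Ico 0 1)).add_const B).sub_strictConvexOn
    strictConvexOn_artanh

theorem phiDeriv_zero (β B : ℝ) : phiDeriv β B 0 = B := by
  simp [phiDeriv, artanh_zero]

theorem exists_phiDeriv_neg (β B : ℝ) : ∃ c ∈ Ioo (0 : ℝ) 1, phiDeriv β B c < 0 := by
  refine ⟨tanh (|β| + |B| + 1), ⟨?_, tanh_lt_one _⟩, ?_⟩
  · by_contra! h
    have := artanh_nonpos h
    rw [artanh_tanh] at this
    linarith [abs_nonneg β, abs_nonneg B]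
  · rw [phiDeriv, artanh_tanh]
    have hβt : β * tanh (|β| + |B| + 1) ≤ |β| := (le_abs_self _).trans <| by
      rw [abs_mul]
      exact mul_le_of_le_one_right (abs_nonneg β) (abs_tanh_lt_one _).le
    linarith [le_abs_self B]

theorem exists_phiDeriv_eq_zero (hB : 0 < B) : ∃ m ∈ Ioo (0 : ℝ) 1, phiDeriv β B m = 0 := by
  obtain ⟨c, ⟨hc₀, hc₁⟩, hc⟩ := exists_phiDeriv_neg β B
  have hcont : ContinuousOn (phiDeriv β B) (Icc 0 c) := by
    have := continuousOn_artanh.mono (Icc_subset_Ioo (by norm_num : (-1 : ℝ) < 0) hc₁)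
    unfold phiDeriv
    fun_prop
  obtain ⟨m, ⟨hm₀, hmc⟩, hm⟩ := intermediate_value_Ioo' hc₀.le hcont ⟨hc, by rwa [phiDeriv_zero]⟩
  exact ⟨m, ⟨hm₀, hmc.trans hc₁⟩, hm⟩

theorem exists_phi_lt_phi_of_pos (hB : 0 < B) :
    ∃ m ∈ Ioo (0 : ℝ) 1, ∀ y ∈ Icc (-1 : ℝ) 1, y ≠ m → phi β B y < phi β B m := by
  obtain ⟨m, ⟨hm₀, hm₁⟩, hm⟩ := exists_phiDeriv_eq_zero (β := β) hB
  have hconc := strictConcaveOn_phiDeriv β B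
  have h0 : (0 : ℝ) ∈ Ico 0 1 := ⟨le_rfl, one_pos⟩
  have hpos : ∀ x ∈ Ioo 0 m, 0 < phiDeriv β B x := fun x hx => by
    have := hconc.lt_on_openSegment h0 ⟨hm₀.le, hm₁⟩ hm₀.ne (by rwa [openSegment_eq_Ioo hm₀])
    rwa [phiDeriv_zero, hm, min_eq_right hB.le] at this
  have hneg : ∀ x ∈ Ioo m 1, phiDeriv β B x < 0 := fun x hx => by
    have := hconc.lt_on_openSegment h0 ⟨(hm₀.trans hx.1).le, hx.2⟩ (hm₀.trans hx.1).ne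
      (by rw [openSegment_eq_Ioo (hm₀.trans hx.1)]; exact ⟨hm₀, hx.1⟩)
    rw [phiDeriv_zero, hm, min_lt_iff] at this
    exact this.resolve_left (lt_asymm hB)
  have hmax : ∀ y ∈ Icc (0 : ℝ) 1, y ≠ m → phi β B y < phi β B m := fun y hy hym =>
    apply_lt_apply_of_deriv_pos_of_deriv_neg (continuous_phi β B).continuousOn
      (fun x hx => hasDerivAt_phi ⟨by linarith [hx.1], hx.2⟩) ⟨hm₀.le, hm₁.le⟩ hpos hneg hy hym
  refine ⟨m, ⟨hm₀, hm₁⟩, fun y hy hym => ?_⟩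
  rcases le_or_gt 0 y with hy₀ | hy₀
  · exact hmax y ⟨hy₀, hy.2⟩ hym
  · have hmirror : phi β B (-y) ≤ phi β B m := by
      rcases eq_or_ne (-y) m with h | h
      · rw [h]
      · exact (hmax (-y) ⟨by linarith, by linarith [hy.1]⟩ h).le
    have hBy : B * y < 0 := mul_neg_of_pos_of_neg hB hy₀
    linarith [phi_neg_eq_sub β B y]

theorem exists_phi_lt_phi (hB : B ≠ 0) :
    ∃ m ∈ Ioo (-1 : ℝ) 1, ∀ y ∈ Icc (-1 : ℝ) 1, y ≠ m → phi β B y < phi β B m := by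
  rcases hB.lt_or_gt with hB | hB
  · obtain ⟨m, ⟨hm₀, hm₁⟩, hmax⟩ := exists_phi_lt_phi_of_pos (β := β) (neg_pos.mpr hB)
    refine ⟨-m, ⟨by linarith, by linarith⟩, fun y hy hym => ?_⟩
    have := hmax (-y) ⟨by linarith [hy.2], by linarith [hy.1]⟩ fun h => hym (by rw [← h, neg_neg])
    rwa [phi_neg, neg_neg, ← phi_neg] at this
  · obtain ⟨m, ⟨hm₀, hm₁⟩, hmax⟩ := exists_phi_lt_phi_of_pos (β := β) hB
    exact ⟨m, ⟨by linarith, hm₁⟩, hmax⟩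

end MeanField

theorem stmt17_general (β B : ℝ) (hB : B ≠ 0) :
    ∃ m₀ ∈ Set.Ioo (-1 : ℝ) 1,
      (∀ y ∈ Set.Icc (-1 : ℝ) 1,
        β / 2 * y ^ 2 + B * y -
            ((1 + y) / 2 * Real.log ((1 + y) / 2) + (1 - y) / 2 * Real.log ((1 - y) / 2)) ≤
          β / 2 * m₀ ^ 2 + B * m₀ -
            ((1 + m₀) / 2 * Real.log ((1 + m₀) / 2) +
              (1 - m₀) / 2 * Real.log ((1 - m₀) / 2))) ∧
      ∀ y ∈ Set.Icc (-1 : ℝ) 1,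
        (β / 2 * y ^ 2 + B * y -
            ((1 + y) / 2 * Real.log ((1 + y) / 2) + (1 - y) / 2 * Real.log ((1 - y) / 2)) =
          β / 2 * m₀ ^ 2 + B * m₀ -
            ((1 + m₀) / 2 * Real.log ((1 + m₀) / 2) +
              (1 - m₀) / 2 * Real.log ((1 - m₀) / 2))) → y = m₀ := by
  simp only [← MeanField.phi_eq]
  obtain ⟨m, hm, hmax⟩ := MeanField.exists_phi_lt_phi (β := β) hB
  refine ⟨m, hm, fun y hy => ?_, fun y hy heq => ?_⟩
  · rcases eq_or_ne y m with rfl | hym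
    · exact le_rfl
    · exact (hmax y hy hym).le
  · by_contra hym
    exact (hmax y hy hym).ne heq

/-- `φ(y) = (β/2) y² + B y - I(y)` has a unique global maximizer over `[-1,1]`,
which lies in `(-1,1)`. -/
theorem stmt17 (β B : ℝ) (hβ : 0 < β) (hB : B ≠ 0) :
    ∃ m₀ ∈ Set.Ioo (-1 : ℝ) 1,
      (∀ y ∈ Set.Icc (-1 : ℝ) 1,
        β / 2 * y ^ 2 + B * y -
            ((1 + y) / 2 * Real.log ((1 + y) / 2) + (1 - y) / 2 * Real.log ((1 - y) / 2)) ≤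
          β / 2 * m₀ ^ 2 + B * m₀ -
            ((1 + m₀) / 2 * Real.log ((1 + m₀) / 2) +
              (1 - m₀) / 2 * Real.log ((1 - m₀) / 2))) ∧
      ∀ y ∈ Set.Icc (-1 : ℝ) 1,
        (β / 2 * y ^ 2 + B * y -
            ((1 + y) / 2 * Real.log ((1 + y) / 2) + (1 - y) / 2 * Real.log ((1 - y) / 2)) =
          β / 2 * m₀ ^ 2 + B * m₀ -
            ((1 + m₀) / 2 * Real.log ((1 + m₀) / 2) +
              (1 - m₀) / 2 * Real.log ((1 - m₀) / 2))) → y = m₀ :=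
  stmt17_general β B hB
end
end

section
/- Let {A_n} be a sequence of n×n symmetric matrices with nonnegative entries and zeros on the diagonal satisfying (BD) and (NT), fix (β, B) ∈ Θ, and let X be an observation from P_{n,β,B}. Then limsup_{n→∞} (1/n) E[ ( Σ_{i=1}^n ( m_i(X) − Σ_{j=1}^n A_n(i,j) tanh(β m_j(X) + B) ) )² ] < ∞, where E denotes expectation under P_{n,β,B}. -/
open Filter

noncomputable section

/-!
Write the sum as `F(x) = ∑ⱼ cⱼ εⱼ(x)`, with column sums `cⱼ = ∑ᵢ A(i,j) ≤ γ` and residuals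
`εⱼ(x) = xⱼ - tanh(β mⱼ(x) + B)`. As `A(j,j) = 0`, `tanh(β mⱼ + B)` is the conditional mean of `xⱼ`
given the other spins, so `E[εⱼ g] = 0` whenever `g` does not depend on `xⱼ`. Taking for `g` the
residual `εₖ` with `xⱼ` set to `0`, which differs from `εₖ` by at most `δⱼₖ + |β| A(k,j)` because
`tanh` is 1-Lipschitz, gives `|E[εⱼ εₖ]| ≤ 2 (δⱼₖ + |β| A(k,j))`; summing against `cⱼ cₖ ≤ γ²`
yields `E[F²] ≤ 2 γ² (1 + |β| γ) n`.
-/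

namespace Real

theorem hasDerivAt_tanh (x : ℝ) : HasDerivAt tanh (1 - tanh x ^ 2) x := by
  have h := (hasDerivAt_sinh x).div (hasDerivAt_cosh x) (cosh_pos x).ne'
  rw [show tanh = sinh / cosh from funext tanh_eq_sinh_div_cosh]
  refine h.congr_deriv ?_
  rw [Pi.div_apply]
  field_simp

theorem lipschitzWith_tanh : LipschitzWith 1 tanh :=
  lipschitzWith_of_nnnorm_deriv_le (fun x => (hasDerivAt_tanh x).differentiableAt) fun x => by
    rw [(hasDerivAt_tanh x).deriv, ← NNReal.coe_le_coe, coe_nnnorm, NNReal.coe_one, norm_eq_abs,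
      abs_of_nonneg (sub_nonneg.2 (tanh_sq_lt_one x).le)]
    linarith [sq_nonneg (tanh x)]

theorem abs_tanh_sub_tanh_le (a b : ℝ) : |tanh a - tanh b| ≤ |a - b| := by
  simpa [dist_eq] using lipschitzWith_tanh.dist_le_mul a b

theorem one_sub_tanh_mul_cosh (t : ℝ) : (1 - tanh t) * cosh t = exp (-t) := by
  rw [tanh_eq_sinh_div_cosh, ← cosh_sub_sinh]
  field_simp [(cosh_pos t).ne']

theorem one_add_tanh_mul_cosh (t : ℝ) : (1 + tanh t) * cosh t = exp t := by
  rw [tanh_eq_sinh_div_cosh, ← cosh_add_sinh]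
  field_simp [(cosh_pos t).ne']

theorem sub_tanh_add_neg_sub_tanh_mul_exp {s : ℝ} (hs : |s| = 1) (t : ℝ) :
    (s - tanh t) + (-s - tanh t) * exp (-(2 * s) * t) = 0 := by
  have h₁ := one_sub_tanh_mul_cosh t
  have h₂ := one_add_tanh_mul_cosh t
  refine (mul_eq_zero.1 ?_).resolve_left (cosh_pos t).ne'
  rcases (abs_eq zero_le_one).1 hs with rfl | rfl
  · have h : exp t * exp (-(2 * 1) * t) = exp (-t) := by rw [← exp_add]; ring_nf
    linear_combination h₁ - exp (-(2 * 1) * t) * h₂ - h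
  · have h : exp (-(2 * -1) * t) * exp (-t) = exp t := by rw [← exp_add]; ring_nf
    linear_combination -h₂ + exp (-(2 * -1) * t) * h₁ + h

end Real

open Function

theorem sum_update_mul {ι R : Type*} [Fintype ι] [DecidableEq ι] [CommRing R]
    (x f : ι → R) (j : ι) (s : R) :
    ∑ i, update x j s i * f i = ∑ i, x i * f i + (s - x j) * f j := by
  rw [← Finset.add_sum_erase _ _ (Finset.mem_univ j),
    ← Finset.add_sum_erase _ _ (Finset.mem_univ j),
    Finset.sum_congr rfl fun i hi => by rw [update_of_ne (Finset.ne_of_mem_erase hi)],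
    update_self]
  ring

theorem abs_spinVec (n : ℕ) (σ : Fin n → Bool) (i : Fin n) : |spinVec n σ i| = 1 := by
  unfold spinVec; split <;> norm_num

theorem spinVec_update_not {n : ℕ} (σ : Fin n → Bool) (j : Fin n) :
    spinVec n (update σ j (!σ j)) = update (spinVec n σ) j (-spinVec n σ j) := by
  funext i
  rcases eq_or_ne i j with rfl | h
  · simp only [spinVec, update_self]; cases σ i <;> norm_num
  · simp only [spinVec, update_of_ne h]

def spinResidual {n : ℕ} (A : Matrix (Fin n) (Fin n) ℝ) (β B : ℝ) (x : Fin n → ℝ) (i : Fin n) :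
    ℝ :=
  x i - bvec A β B x i

section Ising

variable {n : ℕ} (A : Matrix (Fin n) (Fin n) ℝ) (β B : ℝ)

theorem mloc_update (x : Fin n → ℝ) (j k : Fin n) (s : ℝ) :
    mloc A (update x j s) k = mloc A x k + A k j * (s - x j) := by
  simp only [mloc, mul_comm (A k _)]
  rw [sum_update_mul]

theorem quadForm_update (hA : A.IsSymm) (hdiag : ∀ i, A i i = 0) (x : Fin n → ℝ) (j : Fin n)
    (s : ℝ) :
    ∑ i, ∑ k, A i k * update x j s i * update x j s k =
      ∑ i, ∑ k, A i k * x i * x k + 2 * (s - x j) * mloc A x j := by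
  have hQ : ∀ y : Fin n → ℝ, ∑ i, ∑ k, A i k * y i * y k = ∑ i, y i * mloc A y i := fun y =>
    Finset.sum_congr rfl fun i _ => by
      rw [mloc, Finset.mul_sum]; exact Finset.sum_congr rfl fun k _ => by ring
  have hcol : ∑ i, x i * (A i j * (s - x j)) = (s - x j) * mloc A x j := by
    rw [mloc, Finset.mul_sum]
    exact Finset.sum_congr rfl fun i _ => by rw [hA.apply i j]; ring
  rw [hQ, hQ, sum_update_mul, mloc_update A x j j, hdiag, zero_mul, add_zero]
  simp only [mloc_update, mul_add, Finset.sum_add_distrib, hcol]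
  ring

theorem isingWt_update_neg (hA : A.IsSymm) (hdiag : ∀ i, A i i = 0) (x : Fin n → ℝ)
    (j : Fin n) :
    isingWt A β B (update x j (-x j)) =
      isingWt A β B x * Real.exp (-(2 * x j) * (β * mloc A x j + B)) := by
  have hsum := sum_update_mul x (fun _ => 1) j (-x j)
  simp only [mul_one] at hsum
  rw [isingWt, isingWt, ← Real.exp_add, quadForm_update A hA hdiag, hsum]
  ring_nf

theorem spinResidual_update_neg_self (hdiag : ∀ i, A i i = 0) (x : Fin n → ℝ) (j : Fin n) :
    spinResidual A β B (update x j (-x j)) j = -x j - Real.tanh (β * mloc A x j + B) := by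
  rw [spinResidual, bvec, mloc_update, hdiag, update_self, zero_mul, add_zero]

theorem abs_spinResidual_le_two {x : Fin n → ℝ} {i : Fin n} (hx : |x i| ≤ 1) :
    |spinResidual A β B x i| ≤ 2 := by
  have := Real.abs_tanh_lt_one (β * mloc A x i + B)
  exact (abs_sub _ _).trans (by rw [bvec]; linarith)

theorem abs_spinResidual_sub_update_zero_le {x : Fin n → ℝ} {j : Fin n} (hx : |x j| = 1)
    (k : Fin n) :
    |spinResidual A β B x k - spinResidual A β B (update x j 0) k| ≤
      (if k = j then 1 else 0) + |β| * |A k j| := by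
  have hspin : |x k - update x j 0 k| = if k = j then 1 else 0 := by
    rcases eq_or_ne k j with rfl | h
    · simp [hx]
    · simp [h]
  have hfield : |Real.tanh (β * mloc A x k + B) - Real.tanh (β * mloc A (update x j 0) k + B)| ≤
      |β| * |A k j| := by
    refine (Real.abs_tanh_sub_tanh_le _ _).trans (le_of_eq ?_)
    rw [mloc_update, ← mul_one (|β| * |A k j|), ← hx, ← abs_mul, ← abs_mul]
    ring_nf
  calc |spinResidual A β B x k - spinResidual A β B (update x j 0) k|
      = |(x k - update x j 0 k) - (Real.tanh (β * mloc A x k + B) -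
          Real.tanh (β * mloc A (update x j 0) k + B))| := by
        rw [spinResidual, spinResidual, bvec, bvec]; ring_nf
    _ ≤ _ := (abs_sub _ _).trans (by rw [hspin]; exact add_le_add_right hfield _)

theorem sum_mloc_sub_sum_mul_tanh (x : Fin n → ℝ) :
    ∑ i, (mloc A x i - ∑ j, A i j * Real.tanh (β * mloc A x j + B)) =
      ∑ j, (∑ i, A i j) * spinResidual A β B x j := by
  simp only [spinResidual, bvec, mloc, Finset.sum_mul, ← Finset.sum_sub_distrib, ← mul_sub]
  exact Finset.sum_comm

end Ising

section IsingExp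

variable {n : ℕ} (A : Matrix (Fin n) (Fin n) ℝ) (β B : ℝ)

theorem isingPartition_pos : 0 < ∑ σ : Fin n → Bool, isingWt A β B (spinVec n σ) :=
  Finset.sum_pos (fun _ _ => Real.exp_pos _) Finset.univ_nonempty

theorem isingExp_add (f g : (Fin n → ℝ) → ℝ) :
    isingExp A β B (fun x => f x + g x) = isingExp A β B f + isingExp A β B g := by
  simp only [isingExp, add_mul, Finset.sum_add_distrib, add_div]

theorem isingExp_const_mul (c : ℝ) (f : (Fin n → ℝ) → ℝ) :
    isingExp A β B (fun x => c * f x) = c * isingExp A β B f := by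
  simp only [isingExp, mul_assoc, ← Finset.mul_sum, mul_div_assoc]

theorem isingExp_sum {ι : Type*} (s : Finset ι) (f : ι → (Fin n → ℝ) → ℝ) :
    isingExp A β B (fun x => ∑ i ∈ s, f i x) = ∑ i ∈ s, isingExp A β B (f i) := by
  simp only [isingExp, Finset.sum_mul, ← Finset.sum_div]
  rw [Finset.sum_comm]

theorem abs_isingExp_le {f : (Fin n → ℝ) → ℝ} {c : ℝ} (hf : ∀ σ, |f (spinVec n σ)| ≤ c) :
    |isingExp A β B f| ≤ c := by
  have hZ := isingPartition_pos A β B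
  rw [isingExp, abs_div, abs_of_pos hZ, div_le_iff₀ hZ, Finset.mul_sum]
  refine (Finset.abs_sum_le_sum_abs _ _).trans (Finset.sum_le_sum fun σ _ => ?_)
  have hw : 0 < isingWt A β B (spinVec n σ) := Real.exp_pos _
  rw [abs_mul, abs_of_pos hw]
  exact mul_le_mul_of_nonneg_right (hf σ) hw.le

/-- Flipping spin `j` pairs up configurations, and under the Ising weights the residual of spin `j`
cancels within each pair. -/
theorem isingExp_spinResidual_mul_eq_zero (hA : A.IsSymm) (hdiag : ∀ i, A i i = 0) (j : Fin n)
    {g : (Fin n → ℝ) → ℝ} (hg : ∀ x, g (update x j (-x j)) = g x) :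
    isingExp A β B (fun x => spinResidual A β B x j * g x) = 0 := by
  rw [isingExp, div_eq_zero_iff]
  left
  refine Finset.sum_ninvolution (fun σ => update σ j (!σ j)) (fun σ => ?_) (fun σ _ => ?_)
    (fun _ => Finset.mem_univ _) (fun σ => by simp)
  · have hpair := Real.sub_tanh_add_neg_sub_tanh_mul_exp (abs_spinVec n σ j)
      (β * mloc A (spinVec n σ) j + B)
    rw [spinVec_update_not, hg, isingWt_update_neg A β B hA hdiag,
      spinResidual_update_neg_self A β B hdiag, spinResidual, bvec]
    linear_combination (g (spinVec n σ) * isingWt A β B (spinVec n σ)) * hpair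
  · intro h
    simpa using congr_fun h j

theorem abs_isingExp_spinResidual_mul_le (hA : A.IsSymm) (hdiag : ∀ i, A i i = 0) (j k : Fin n) :
    |isingExp A β B (fun x => spinResidual A β B x j * spinResidual A β B x k)| ≤
      2 * ((if k = j then 1 else 0) + |β| * |A k j|) := by
  set g : (Fin n → ℝ) → ℝ := fun x => spinResidual A β B (update x j 0) k
  have hg : ∀ x, g (update x j (-x j)) = g x := fun x => by simp only [g, update_idem]
  have hsplit : isingExp A β B (fun x => spinResidual A β B x j * spinResidual A β B x k) =
      isingExp A β B (fun x => spinResidual A β B x j * g x) +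
        isingExp A β B (fun x => spinResidual A β B x j * (spinResidual A β B x k - g x)) := by
    rw [← isingExp_add]
    simp only [mul_sub, add_sub_cancel]
  rw [hsplit, isingExp_spinResidual_mul_eq_zero A β B hA hdiag j hg, zero_add]
  refine abs_isingExp_le A β B fun σ => ?_
  rw [abs_mul]
  exact mul_le_mul (abs_spinResidual_le_two A β B (abs_spinVec n σ j).le)
    (abs_spinResidual_sub_update_zero_le A β B (abs_spinVec n σ j) k) (abs_nonneg _) zero_le_two

theorem isingExp_sq_sum_mloc_sub_le (hA : A.IsSymm) (hnonneg : ∀ i j, 0 ≤ A i j)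
    (hdiag : ∀ i, A i i = 0) {γ : ℝ} (hrow : ∀ i, ∑ j, A i j ≤ γ) :
    isingExp A β B (fun x => (∑ i, (mloc A x i -
        ∑ j, A i j * Real.tanh (β * mloc A x j + B))) ^ 2) ≤
      2 * γ ^ 2 * (1 + |β| * γ) * n := by
  set c : Fin n → ℝ := fun j => ∑ i, A i j
  have hc0 : ∀ j, 0 ≤ c j := fun j => Finset.sum_nonneg fun i _ => hnonneg i j
  have hcγ : ∀ j, c j ≤ γ := fun j => by simpa only [c, hA.apply] using hrow j
  have hexpand : isingExp A β B (fun x => (∑ i, (mloc A x i -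
        ∑ j, A i j * Real.tanh (β * mloc A x j + B))) ^ 2) =
      ∑ j, ∑ k, c j * c k *
        isingExp A β B (fun x => spinResidual A β B x j * spinResidual A β B x k) := by
    simp only [sum_mloc_sub_sum_mul_tanh, sq, Finset.sum_mul_sum, isingExp_sum,
      ← isingExp_const_mul]
    exact Finset.sum_congr rfl fun j _ => Finset.sum_congr rfl fun k _ =>
      congrArg _ (funext fun x => by ring)
  have htotal : ∑ j : Fin n, ∑ k : Fin n, A k j ≤ n * γ := by
    rw [Finset.sum_comm]
    simpa using Finset.sum_le_sum fun k (_ : k ∈ Finset.univ) => hrow k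
  calc _ = _ := hexpand
    _ ≤ ∑ j, ∑ k, γ ^ 2 * (2 * ((if k = j then 1 else 0) + |β| * |A k j|)) := by
      refine Finset.sum_le_sum fun j _ => Finset.sum_le_sum fun k _ => ?_
      calc _ ≤ c j * c k * |isingExp A β B
              (fun x => spinResidual A β B x j * spinResidual A β B x k)| :=
            mul_le_mul_of_nonneg_left (le_abs_self _) (mul_nonneg (hc0 j) (hc0 k))
        _ ≤ _ := mul_le_mul (by nlinarith [hc0 j, hc0 k, hcγ j, hcγ k])
            (abs_isingExp_spinResidual_mul_le A β B hA hdiag j k) (abs_nonneg _) (sq_nonneg γ)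
    _ = 2 * γ ^ 2 * (n + |β| * ∑ j : Fin n, ∑ k : Fin n, A k j) := by
      simp only [abs_of_nonneg (hnonneg _ _), mul_add, Finset.sum_add_distrib, ← Finset.mul_sum,
        Finset.sum_ite_eq', Finset.mem_univ, if_true, Finset.sum_const, Finset.card_univ,
        Fintype.card_fin, nsmul_eq_mul, mul_one]
      ring
    _ ≤ 2 * γ ^ 2 * (n + |β| * (n * γ)) := by gcongr
    _ = 2 * γ ^ 2 * (1 + |β| * γ) * n := by ring

end IsingExp

theorem stmt18_general (A : (n : ℕ) → Matrix (Fin n) (Fin n) ℝ)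
    (hsymm : ∀ n, (A n).IsSymm)
    (hnonneg : ∀ n, ∀ i j : Fin n, 0 ≤ A n i j)
    (hdiag : ∀ n, ∀ i : Fin n, A n i i = 0)
    (hBD : ∃ γ : ℝ, ∀ n, ∀ i : Fin n, (∑ j, A n i j) ≤ γ)
    (β B : ℝ) :
    IsBoundedUnder (· ≤ ·) atTop (fun n : ℕ => (1 / (n : ℝ)) * isingExp (A n) β B
      (fun x => (∑ i, (mloc (A n) x i -
        ∑ j, A n i j * Real.tanh (β * mloc (A n) x j + B))) ^ 2)) := by
  obtain ⟨γ, hrow⟩ := hBD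
  refine isBoundedUnder_of_eventually_le (a := 2 * γ ^ 2 * (1 + |β| * γ))
    (eventually_atTop.2 ⟨1, fun n hn => ?_⟩)
  have hn : (0 : ℝ) < n := by exact_mod_cast hn
  calc _ ≤ 1 / (n : ℝ) * (2 * γ ^ 2 * (1 + |β| * γ) * n) :=
        mul_le_mul_of_nonneg_left (isingExp_sq_sum_mloc_sub_le (A n) β B (hsymm n) (hnonneg n)
          (hdiag n) (hrow n)) (by positivity)
    _ = _ := by field_simp

/-- `limsup (1/n) E[(∑ᵢ (mᵢ(X) - ∑ⱼ A(i,j) tanh(β mⱼ(X)+B)))²] < ∞`. -/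
theorem stmt18 (A : (n : ℕ) → Matrix (Fin n) (Fin n) ℝ)
    (hsymm : ∀ n, (A n).IsSymm)
    (hnonneg : ∀ n, ∀ i j : Fin n, 0 ≤ A n i j)
    (hdiag : ∀ n, ∀ i : Fin n, A n i i = 0)
    (hBD : ∃ γ : ℝ, ∀ n, ∀ i : Fin n, (∑ j, A n i j) ≤ γ)
    (hNT : 0 < liminf (fun n : ℕ => (1 / (n : ℝ)) * ∑ i, ∑ j, A n i j) atTop)
    (β B : ℝ) (hβ : 0 < β) (hB : B ≠ 0) :
    IsBoundedUnder (· ≤ ·) atTop (fun n : ℕ => (1 / (n : ℝ)) * isingExp (A n) β B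
      (fun x => (∑ i, (mloc (A n) x i -
        ∑ j, A n i j * Real.tanh (β * mloc (A n) x j + B))) ^ 2)) :=
  stmt18_general A hsymm hnonneg hdiag hBD β B
end
end
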